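/- Let m ≥ 2 and let n be an integer with (3^{m−1} + 1)/2 + 3^{m−2} + 1 ≤ n ≤ (3^m − 1)/2. Then the number of feasible partitions of n satisfies the recursion t(n) = Σ_{R = ⌈(n−1)/3⌉}^{(3^{m−1} − 1)/2} t(R). -/

import Mathlib

/-- `w : Fin m → ℕ` (1-indexed as `w_1 ≤ … ≤ w_m` in the paper) is a weighing
sequence for `n`: a nondecreasing list of `m` positive integers summing to `n`
such that every integer `1 ≤ k ≤ n` can be written as
`k = u_1 w_1 + … + u_m w_m` with each `u_i ∈ {-1, 0, 1}`. -/
def IsWeighingSeq (n m : ℕ) (w : Fin m → ℕ) : Prop :=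
  (∀ i, 0 < w i) ∧ Monotone w ∧ (∑ i, w i) = n ∧
  ∀ k : ℤ, 1 ≤ k → k ≤ (n : ℤ) →
    ∃ u : Fin m → ℤ, (∀ i, u i = -1 ∨ u i = 0 ∨ u i = 1) ∧
      k = ∑ i, u i * (w i : ℤ)

/-- A feasible partition of `n`: a weighing sequence for `n` of minimal length. -/
def IsFeasible (n m : ℕ) (w : Fin m → ℕ) : Prop :=
  IsWeighingSeq n m w ∧
    ∀ (m' : ℕ) (w' : Fin m' → ℕ), IsWeighingSeq n m' w' → m ≤ m'

/-- `t n` is the number of feasible partitions of `n` (note `t 0 = 1`, the empty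
partition being the unique feasible partition of `0`). -/
noncomputable def t (n : ℕ) : ℕ :=
  Nat.card {p : (m : ℕ) × (Fin m → ℕ) // IsFeasible n p.1 p.2}

/-!
A nondecreasing sequence of positive weights is a weighing sequence exactly when each weight
is at most one more than twice the sum of the preceding ones. Hence a weighing sequence of
length `m` weighs at most `(3^m - 1)/2`, every `n` with `3^(m-1) < 2n + 1 ≤ 3^m` has one of
length `m`, and the feasible partitions of such `n` are its weighing sequences of length `m`.
In the given range of `n`, deleting the largest part is a bijection onto the feasible
partitions of the `R` with `⌈(n-1)/3⌉ ≤ R ≤ (3^(m-1) - 1)/2`: the criterion for the deleted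
part `n - R` is `n - R ≤ 2R + 1`, and the lower bound on `n` keeps `n - R` above every part of
a weighing sequence of `R`.
-/

open Finset

section SignedSum

variable {ι : Type*} {s : Finset ι} {u w : ι → ℤ}

lemma Finset.abs_sum_mul_le_sum (hu : ∀ i ∈ s, |u i| ≤ 1) (hw : ∀ i ∈ s, 0 ≤ w i) :
    |∑ i ∈ s, u i * w i| ≤ ∑ i ∈ s, w i :=
  (abs_sum_le_sum_abs _ _).trans <| sum_le_sum fun i hi => by
    rw [abs_mul, abs_of_nonneg (hw i hi)]
    exact mul_le_of_le_one_left (hw i hi) (hu i hi)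

lemma Finset.sum_mul_eq_sum_or_le_sum_sub {c : ℤ} (hc : 0 ≤ c) (hu : ∀ i ∈ s, |u i| ≤ 1)
    (hw : ∀ i ∈ s, c ≤ w i) :
    ∑ i ∈ s, u i * w i = ∑ i ∈ s, w i ∨ ∑ i ∈ s, u i * w i ≤ ∑ i ∈ s, w i - c := by
  classical
  by_cases hall : ∀ i ∈ s, u i = 1
  · exact .inl <| sum_congr rfl fun i hi => by rw [hall i hi, one_mul]
  push Not at hall
  obtain ⟨i₀, hi₀, hne⟩ := hall
  have hu₀ : u i₀ ≤ 0 := by have := abs_le.mp (hu i₀ hi₀); omega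
  have hfirst : u i₀ * w i₀ ≤ w i₀ - c := by nlinarith [hw i₀ hi₀]
  have hrest : ∑ i ∈ s.erase i₀, u i * w i ≤ ∑ i ∈ s.erase i₀, w i :=
    sum_le_sum fun i hi => by
      have hwi := hc.trans (hw i (mem_of_mem_erase hi))
      exact mul_le_of_le_one_left hwi (le_abs_self _ |>.trans (hu i (mem_of_mem_erase hi)))
  right
  rw [← add_sum_erase s _ hi₀, ← add_sum_erase s w hi₀]
  linarith

end SignedSum

lemma Finset.sum_Iio_add_sum_Ici {α M : Type*} [LinearOrder α] [Fintype α]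
    [LocallyFiniteOrderBot α] [LocallyFiniteOrderTop α] [AddCommMonoid M] (f : α → M) (j : α) :
    ∑ i < j, f i + ∑ i ∈ Ici j, f i = ∑ i, f i := by
  classical
  rw [← sum_filter_add_sum_filter_not univ (· < j)]
  simp [filter_gt_eq_Iio, filter_le_eq_Ici]

variable {m n : ℕ}

/-- The signed analogue of Brown's completeness criterion for sequences. -/
def IsSignedComplete (w : Fin m → ℕ) : Prop :=
  ∀ j, w j ≤ 2 * ∑ i < j, w i + 1

lemma isSignedComplete_snoc_iff {w : Fin m → ℕ} {x : ℕ} :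
    IsSignedComplete (Fin.snoc w x : Fin (m + 1) → ℕ) ↔
      IsSignedComplete w ∧ x ≤ 2 * ∑ i, w i + 1 := by
  simp [IsSignedComplete, Fin.forall_fin_succ', Fin.sum_Iio_castSucc, Fin.Iio_last_eq_map]

namespace IsSignedComplete

variable {w : Fin m → ℕ}

lemma three_mul_le (hw : IsSignedComplete w) (j : Fin m) : 3 * w j ≤ 2 * ∑ i, w i + 1 := by
  have hj := hw j
  have hle : ∑ i < j, w i + w j ≤ ∑ i, w i := by
    rw [sum_Iio_add_eq_sum_Iic]
    exact sum_le_sum_of_subset (subset_univ _)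
  omega

lemma two_mul_sum_add_one_le (hw : IsSignedComplete w) : 2 * ∑ i, w i + 1 ≤ 3 ^ m := by
  induction w using Fin.snocInduction with
  | elim0 => simp
  | snoc w x ih =>
    obtain ⟨hw, hx⟩ := isSignedComplete_snoc_iff.mp hw
    have := ih hw
    rw [Fin.sum_snoc, pow_succ]
    omega

lemma exists_signed_sum_eq (hw : IsSignedComplete w) {k : ℤ} (hk : |k| ≤ ∑ i, (w i : ℤ)) :
    ∃ u : Fin m → ℤ, (∀ i, u i = -1 ∨ u i = 0 ∨ u i = 1) ∧ k = ∑ i, u i * (w i : ℤ) := by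
  induction w using Fin.snocInduction generalizing k with
  | elim0 => exact ⟨Fin.elim0, fun i => i.elim0, by simpa using hk⟩
  | snoc w x ih =>
    obtain ⟨hw, hx⟩ := isSignedComplete_snoc_iff.mp hw
    simp only [Fin.sum_univ_castSucc, Fin.snoc_castSucc, Fin.snoc_last, abs_le] at hk
    have hx' : (x : ℤ) ≤ 2 * ∑ i, (w i : ℤ) + 1 := by exact_mod_cast hx
    obtain ⟨c, hc, hck⟩ :
        ∃ c : ℤ, (c = -1 ∨ c = 0 ∨ c = 1) ∧ |k - c * x| ≤ ∑ i, (w i : ℤ) := by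
      simp only [abs_le]
      rcases lt_or_ge (∑ i, (w i : ℤ)) k with h | h
      · exact ⟨1, by simp, by constructor <;> linarith⟩
      rcases lt_or_ge k (-∑ i, (w i : ℤ)) with h' | h'
      · exact ⟨-1, by simp, by constructor <;> linarith⟩
      · exact ⟨0, by simp, by constructor <;> linarith⟩
    obtain ⟨u, hu, hsum⟩ := ih hw hck
    refine ⟨Fin.snoc u c, Fin.forall_fin_succ'.mpr ⟨by simpa using hu, by simpa using hc⟩, ?_⟩
    simp [Fin.sum_univ_castSucc, ← hsum]

end IsSignedComplete

lemma IsWeighingSeq.isSignedComplete {w : Fin m → ℕ} (hw : IsWeighingSeq n m w) :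
    IsSignedComplete w := by
  obtain ⟨-, hmono, hsum, hrep⟩ := hw
  intro j
  by_contra! hj
  set S : ℤ := ∑ i < j, (w i : ℤ)
  set V : ℤ := ∑ i ∈ Ici j, (w i : ℤ)
  have hSV : S + V = n := by rw [sum_Iio_add_sum_Ici, ← hsum]; push_cast; rfl
  have hjV : (w j : ℤ) ≤ V :=
    single_le_sum (f := fun i => (w i : ℤ)) (fun i _ => by positivity) (mem_Ici.mpr le_rfl)
  have hjS : 2 * S + 1 < w j := by simp only [S]; exact_mod_cast hj
  have hS : 0 ≤ S := sum_nonneg fun i _ => by positivity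
  -- In a representation of `n - 2S - 1`, the weights from `w j` on must all get coefficient `1`
  -- (any other coefficient costs at least `w j > 2S + 1`), and then the rest must give `-S - 1`.
  obtain ⟨u, hu, hk⟩ := hrep (n - 2 * S - 1) (by omega) (by omega)
  have hu' : ∀ i, |u i| ≤ 1 := fun i => by rcases hu i with h | h | h <;> simp [h]
  rw [← sum_Iio_add_sum_Ici _ j] at hk
  have hA := abs_le.mp <| abs_sum_mul_le_sum (s := Iio j)
    (w := fun i => (w i : ℤ)) (fun i _ => hu' i) (fun i _ => by positivity)
  rcases sum_mul_eq_sum_or_le_sum_sub (s := Ici j) (w := fun i => (w i : ℤ)) (c := w j)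
    (by positivity) (fun i _ => hu' i) (fun i hi => by exact_mod_cast hmono (mem_Ici.mp hi))
    with hT | hT <;> omega

theorem isWeighingSeq_iff {w : Fin m → ℕ} :
    IsWeighingSeq n m w ↔ (∀ i, 0 < w i) ∧ Monotone w ∧ ∑ i, w i = n ∧ IsSignedComplete w := by
  refine ⟨fun hw => ⟨hw.1, hw.2.1, hw.2.2.1, hw.isSignedComplete⟩, ?_⟩
  rintro ⟨hpos, hmono, hsum, hw⟩
  refine ⟨hpos, hmono, hsum, fun k hk₁ hk₂ => hw.exists_signed_sum_eq ?_⟩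
  rwa [← Nat.cast_sum, hsum, abs_of_pos (by omega)]

namespace IsWeighingSeq

variable {w : Fin m → ℕ}

lemma sum_eq (hw : IsWeighingSeq n m w) : ∑ i, w i = n := hw.2.2.1

lemma two_mul_add_one_le (hw : IsWeighingSeq n m w) : 2 * n + 1 ≤ 3 ^ m :=
  hw.sum_eq ▸ hw.isSignedComplete.two_mul_sum_add_one_le

lemma three_mul_le (hw : IsWeighingSeq n m w) (i : Fin m) : 3 * w i ≤ 2 * n + 1 :=
  hw.sum_eq ▸ hw.isSignedComplete.three_mul_le i

end IsWeighingSeq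

lemma Fin.monotone_snoc_iff {α : Type*} [Preorder α] {w : Fin m → α} {x : α} :
    Monotone (Fin.snoc w x : Fin (m + 1) → α) ↔ Monotone w ∧ ∀ i, w i ≤ x := by
  refine ⟨fun h => ⟨fun i j hij => ?_, fun i => ?_⟩, fun ⟨hw, hx⟩ a b hab => ?_⟩
  · simpa using h (Fin.castSucc_le_castSucc_iff.mpr hij)
  · simpa using h (Fin.castSucc_lt_last i).le
  induction b using Fin.lastCases with
  | last => induction a using Fin.lastCases with
    | last => simp
    | cast a => simpa using hx a
  | cast b => induction a using Fin.lastCases with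
    | last => exact absurd hab (not_le.mpr (Fin.castSucc_lt_last b))
    | cast a => simpa using hw (Fin.castSucc_le_castSucc_iff.mp hab)

lemma isWeighingSeq_snoc_iff {w : Fin m → ℕ} {R x : ℕ} :
    IsWeighingSeq (R + x) (m + 1) (Fin.snoc w x) ↔
      IsWeighingSeq R m w ∧ (∀ i, w i ≤ x) ∧ 0 < x ∧ x ≤ 2 * R + 1 := by
  simp only [isWeighingSeq_iff, Fin.forall_fin_succ', Fin.snoc_castSucc, Fin.snoc_last,
    Fin.monotone_snoc_iff, isSignedComplete_snoc_iff, Fin.sum_snoc, add_left_inj]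
  constructor
  · rintro ⟨⟨hpos, hx⟩, ⟨hmono, hle⟩, hsum, hc, hx'⟩
    exact ⟨⟨hpos, hmono, hsum, hc⟩, hle, hx, hsum ▸ hx'⟩
  · rintro ⟨⟨hpos, hmono, hsum, hc⟩, hle, hx, hx'⟩
    exact ⟨⟨hpos, hx⟩, ⟨hmono, hle⟩, hsum, hc, hsum ▸ hx'⟩

theorem exists_isWeighingSeq : ∀ {m N : ℕ}, 2 * N + 1 ≤ 3 ^ m → 3 ^ m < 3 * (2 * N + 1) →
    ∃ w : Fin m → ℕ, IsWeighingSeq N m w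
  | 0, N, h, _ => ⟨Fin.elim0, isWeighingSeq_iff.mpr
      ⟨fun i => i.elim0, fun i => i.elim0, by simp at h ⊢; omega, fun i => i.elim0⟩⟩
  | m + 1, N, h, h' => by
    have hodd : 3 ^ m % 2 = 1 := Nat.odd_iff.mp (Odd.pow (by decide))
    rw [pow_succ] at h h'
    -- The heaviest weight is `N - R` for the least `R` with `N - R ≤ 2R + 1`,
    -- i.e. `R = ⌈(N - 1)/3⌉`.
    obtain ⟨v, hv⟩ := exists_isWeighingSeq (m := m) (N := (N + 1) / 3) (by omega) (by omega)
    refine ⟨Fin.snoc v (N - (N + 1) / 3), ?_⟩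
    have := (isWeighingSeq_snoc_iff (R := (N + 1) / 3) (x := N - (N + 1) / 3)).mpr
      ⟨hv, fun i => by have := hv.three_mul_le i; omega, by omega, by omega⟩
    rwa [Nat.add_sub_cancel' (by omega)] at this

lemma isFeasible_iff_length_eq {N k : ℕ} {w : Fin m → ℕ} (h : 2 * N + 1 ≤ 3 ^ k)
    (h' : 3 ^ k < 3 * (2 * N + 1)) : IsFeasible N m w ↔ m = k ∧ IsWeighingSeq N m w := by
  have hmin : ∀ m' (w' : Fin m' → ℕ), IsWeighingSeq N m' w' → k ≤ m' := fun m' w' hw' => by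
    have := hw'.two_mul_add_one_le
    have : 3 ^ k < 3 ^ (m' + 1) := by rw [pow_succ]; omega
    exact Nat.lt_succ_iff.mp <| (Nat.pow_lt_pow_iff_right (by norm_num)).mp this
  refine ⟨fun hw => ⟨?_, hw.1⟩, fun ⟨hk, hw⟩ => ⟨hw, hk ▸ hmin⟩⟩
  obtain ⟨v, hv⟩ := exists_isWeighingSeq h h'
  exact le_antisymm (hw.2 k v hv) (hmin m w hw.1)

lemma t_eq_card_isWeighingSeq {N k : ℕ} (h : 2 * N + 1 ≤ 3 ^ k)
    (h' : 3 ^ k < 3 * (2 * N + 1)) : t N = Nat.card {w : Fin k → ℕ // IsWeighingSeq N k w} := by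
  refine (Nat.card_eq_of_bijective
    (fun w => ⟨⟨k, w.1⟩, (isFeasible_iff_length_eq h h').mpr ⟨rfl, w.2⟩⟩)
    ⟨fun w₁ w₂ hw => ?_, ?_⟩).symm
  · exact Subtype.ext (eq_of_heq (Sigma.mk.inj_iff.mp (congrArg Subtype.val hw)).2)
  · rintro ⟨⟨m, w⟩, hw⟩
    obtain ⟨rfl, hw⟩ := (isFeasible_iff_length_eq h h').mp hw
    exact ⟨⟨w, hw⟩, rfl⟩

instance {N k : ℕ} : Finite {w : Fin k → ℕ // IsWeighingSeq N k w} :=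
  Finite.of_injective (fun w i => (⟨w.1 i, by have := w.2.three_mul_le i; omega⟩ : Fin (N + 1)))
    fun w₁ w₂ h => Subtype.ext <| funext fun i => congrArg Fin.val (congrFun h i)

section RemoveLargestWeight

variable {k : ℕ}

lemma isWeighingSeq_snoc_sub {R : ℕ} {v : Fin k → ℕ} (hn : 5 * 3 ^ k ≤ 3 * (2 * n + 1))
    (hR : R ∈ Icc ((n + 1) / 3) ((3 ^ k - 1) / 2)) (hv : IsWeighingSeq R k v) :
    IsWeighingSeq n (k + 1) (Fin.snoc v (n - R)) := by
  rw [mem_Icc] at hR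
  have hpow : 0 < 3 ^ k := by positivity
  have := (isWeighingSeq_snoc_iff (R := R) (x := n - R)).mpr
    ⟨hv, fun i => by have := hv.three_mul_le i; omega, by omega, by omega⟩
  rwa [Nat.add_sub_cancel' (by omega)] at this

lemma IsWeighingSeq.init {w : Fin (k + 1) → ℕ} (hw : IsWeighingSeq n (k + 1) w) :
    IsWeighingSeq (∑ i, Fin.init w i) k (Fin.init w) := by
  induction w using Fin.snocCases with
  | snoc v x =>
    obtain rfl : n = ∑ i, v i + x := by rw [← hw.sum_eq, Fin.sum_snoc]
    simpa using (isWeighingSeq_snoc_iff.mp hw).1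

lemma IsWeighingSeq.sum_init_mem_Icc {w : Fin (k + 1) → ℕ} (hw : IsWeighingSeq n (k + 1) w) :
    ∑ i, Fin.init w i ∈ Icc ((n + 1) / 3) ((3 ^ k - 1) / 2) := by
  induction w using Fin.snocCases with
  | snoc v x =>
    obtain rfl : n = ∑ i, v i + x := by rw [← hw.sum_eq, Fin.sum_snoc]
    obtain ⟨hv, -, -, hx⟩ := isWeighingSeq_snoc_iff.mp hw
    have := hv.two_mul_add_one_le
    simp only [Fin.init_snoc, mem_Icc]
    omega

lemma card_isWeighingSeq_succ (hn : 5 * 3 ^ k ≤ 3 * (2 * n + 1)) :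
    Nat.card {w : Fin (k + 1) → ℕ // IsWeighingSeq n (k + 1) w} =
      ∑ R ∈ Icc ((n + 1) / 3) ((3 ^ k - 1) / 2),
        Nat.card {v : Fin k → ℕ // IsWeighingSeq R k v} := by
  rw [← sum_coe_sort, ← Nat.card_sigma]
  refine (Nat.card_eq_of_bijective
    (fun p => ⟨Fin.snoc p.2.1 (n - p.1), isWeighingSeq_snoc_sub hn p.1.2 p.2.2⟩)
    ⟨fun ⟨⟨R₁, hR₁⟩, ⟨v₁, hv₁⟩⟩ ⟨⟨R₂, hR₂⟩, ⟨v₂, hv₂⟩⟩ h => ?_, fun ⟨w, hw⟩ => ?_⟩).symm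
  · have hv : v₁ = v₂ := by simpa using congrArg (Fin.init ∘ Subtype.val) h
    subst hv
    obtain rfl : R₁ = R₂ := hv₁.sum_eq.symm.trans hv₂.sum_eq
    rfl
  · refine ⟨⟨⟨_, hw.sum_init_mem_Icc⟩, ⟨_, hw.init⟩⟩, Subtype.ext ?_⟩
    have hlast : n - ∑ i, Fin.init w i = w (Fin.last k) := by
      rw [← hw.sum_eq, Fin.sum_univ_castSucc]; simp [Fin.init]
    simp only [hlast, Fin.snoc_init_self]

end RemoveLargestWeight

theorem t_recursion_upper_span_general (m n : ℕ)
    (h1 : 3 ^ (m - 1) + 2 * 3 ^ (m - 2) + 3 ≤ 2 * n) (h2 : 2 * n ≤ 3 ^ m - 1) :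
    t n = ∑ R ∈ Finset.Icc ((n + 1) / 3) ((3 ^ (m - 1) - 1) / 2), t R := by
  obtain _ | k := m
  · simp at h1 h2; omega
  rw [show k + 1 - 2 = k - 1 by omega, Nat.add_sub_cancel] at h1
  rw [pow_succ] at h2
  rw [Nat.add_sub_cancel]
  have hk : 3 ^ k ≤ 3 * 3 ^ (k - 1) := by cases k <;> simp [pow_succ']
  rw [t_eq_card_isWeighingSeq (k := k + 1) (by rw [pow_succ]; omega) (by rw [pow_succ]; omega),
    card_isWeighingSeq_succ (by omega)]
  refine sum_congr rfl fun R hR => (t_eq_card_isWeighingSeq ?_ ?_).symm <;>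
    rw [mem_Icc] at hR <;> omega

/-- Second-span recursion: for `m ≥ 2` and
`(3^(m-1) + 1)/2 + 3^(m-2) + 1 ≤ n ≤ (3^m - 1)/2` (stated doubled),
`t n = Σ_{R=⌈(n-1)/3⌉}^{(3^(m-1)-1)/2} t R`, where `⌈(n-1)/3⌉ = (n+1)/3`
(exact natural-number division, `n ≥ 1`). -/
theorem t_recursion_upper_span (m n : ℕ) (hm : 2 ≤ m)
    (h1 : 3 ^ (m - 1) + 2 * 3 ^ (m - 2) + 3 ≤ 2 * n) (h2 : 2 * n ≤ 3 ^ m - 1) :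
    t n = ∑ R ∈ Finset.Icc ((n + 1) / 3) ((3 ^ (m - 1) - 1) / 2), t R :=
  t_recursion_upper_span_general m n h1 h2
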